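/- Let α ∈ (0, 1) ∪ (1, ∞), let A_1, …, A_n be density matrices in ℂ^{d×d} with ∑_{j=1}^n A_j positive definite, let w ∈ ℝ^n have strictly positive entries with ∑_{j=1}^n w[j] = 1, and let Q_⋆(w) be the unique minimizer over density matrices of Q ↦ ∑_{j=1}^n w[j] D_α(A_j ‖ Q). Then for every positive definite Hermitian Q ∈ ℂ^{d×d}: (i) | ∑_{j=1}^n w[j] D_α(A_j ‖ Q) − ∑_{j=1}^n w[j] D_α(A_j ‖ Q_⋆(w)) | ≤ |1/(1−α)| · d_T( Q_⋆(w)^{1−α}, Q^{1−α} ), and (ii) for every j, | D_α(A_j ‖ Q) − D_α(A_j ‖ Q_⋆(w)) | ≤ |1/(1−α)| · d_T( Q_⋆(w)^{1−α}, Q^{1−α} ). -/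

import Mathlib

open scoped ComplexOrder
open Matrix

noncomputable section

/-- Real power of a matrix via the functional calculus (spectral decomposition);
junk value `A` if `A` is not Hermitian. -/
noncomputable def mpow {d : ℕ} (A : Matrix (Fin d) (Fin d) ℂ) (r : ℝ) :
    Matrix (Fin d) (Fin d) ℂ :=
  if hA : A.IsHermitian then
    (hA.eigenvectorUnitary : Matrix (Fin d) (Fin d) ℂ) *
      Matrix.diagonal (fun i => ((hA.eigenvalues i ^ r : ℝ) : ℂ)) *
      star (hA.eigenvectorUnitary : Matrix (Fin d) (Fin d) ℂ)
  else A

/-- The Loewner order: `A ⪯ B` iff `B - A` is positive semidefinite. -/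
def loewnerLE {d : ℕ} (A B : Matrix (Fin d) (Fin d) ℂ) : Prop := (B - A).PosSemidef

/-- Thompson metric on positive definite matrices (extended-real valued):
`inf { r ≥ 0 | exp (-r) • V ⪯ U ⪯ exp r • V }`, equal to `⊤` if no such `r` exists. -/
noncomputable def dTmat {d : ℕ} (V U : Matrix (Fin d) (Fin d) ℂ) : EReal :=
  sInf {x : EReal | ∃ r : ℝ, 0 ≤ r ∧ x = (r : EReal) ∧
    loewnerLE (Real.exp (-r) • V) U ∧ loewnerLE U (Real.exp r • V)}

open Classical in
/-- Thompson metric on entrywise-positive vectors (extended-real valued):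
`max_i |log (v i / u i)|`. -/
noncomputable def dTvec {d : ℕ} (v u : Fin d → ℝ) : EReal :=
  (⨆ i, if 0 < v i ∧ 0 < u i then ((|Real.log (v i / u i)| : ℝ) : EReal) else (⊤ : EReal)) ⊔ 0

/-- A density matrix: Hermitian positive semidefinite with unit trace. -/
def IsDensityMatrix {d : ℕ} (A : Matrix (Fin d) (Fin d) ℂ) : Prop :=
  A.PosSemidef ∧ A.trace = 1

/-- The operator `T_F (U) = (∑ j, w j • A j ^ α / Tr[A j ^ α * U]) ^ ((1 - α)/α)`. -/
noncomputable def TF {n d : ℕ} (w : Fin n → ℝ) (A : Fin n → Matrix (Fin d) (Fin d) ℂ)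
    (α : ℝ) (U : Matrix (Fin d) (Fin d) ℂ) : Matrix (Fin d) (Fin d) ℂ :=
  mpow (∑ j, ((w j : ℂ) / Matrix.trace (mpow (A j) α * U)) • mpow (A j) α) ((1 - α) / α)

/-- The Petz–Rényi divergence of order `α` (real-valued version, intended for
positive definite `Q`): `(α - 1)⁻¹ * log Tr[A^α * Q^(1-α)]`. -/
noncomputable def petzRenyi {d : ℕ} (α : ℝ) (A Q : Matrix (Fin d) (Fin d) ℂ) : ℝ :=
  (α - 1)⁻¹ * Real.log (Matrix.trace (mpow A α * mpow Q (1 - α))).re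

open Classical in
/-- The Petz–Rényi divergence of order `α`, extended-real valued; `⊤` whenever the
defining formula is not well-defined. -/
noncomputable def petzRenyiE {d : ℕ} (α : ℝ) (A Q : Matrix (Fin d) (Fin d) ℂ) : EReal :=
  if 0 < (Matrix.trace (mpow A α * mpow Q (1 - α))).re ∧
      (1 < α → ∀ x : Fin d → ℂ, Q.mulVec x = 0 → A.mulVec x = 0) then
    (((α - 1)⁻¹ * Real.log (Matrix.trace (mpow A α * mpow Q (1 - α))).re : ℝ) : EReal)
  else ⊤

/-- The objective `F(Q) = ∑ j, w j * D_α(A j ‖ Q)`, extended-real valued. -/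
noncomputable def FE {n d : ℕ} (w : Fin n → ℝ) (A : Fin n → Matrix (Fin d) (Fin d) ℂ)
    (α : ℝ) (Q : Matrix (Fin d) (Fin d) ℂ) : EReal :=
  ∑ j, ((w j : ℝ) : EReal) * petzRenyiE α (A j) Q

/-- Membership in the probability simplex `Δ_d`. -/
def memSimplex {d : ℕ} (q : Fin d → ℝ) : Prop := (∀ i, 0 ≤ q i) ∧ ∑ i, q i = 1

/-- The classical operator `T_f (u) = (∑ j, w j • a j ^ α / ⟨a j ^ α, u⟩) ^ ((1 - α)/α)`,
entrywise. -/
noncomputable def Tf {n d : ℕ} (w : Fin n → ℝ) (a : Fin n → Fin d → ℝ) (α : ℝ)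
    (u : Fin d → ℝ) : Fin d → ℝ :=
  fun i => (∑ j, w j * (a j i ^ α) / (∑ k, (a j k ^ α) * u k)) ^ ((1 - α) / α)

open Classical in
/-- The classical Rényi divergence term, extended-real valued; `⊤` whenever the
defining formula is not well-defined. -/
noncomputable def petzVecE {d : ℕ} (α : ℝ) (a q : Fin d → ℝ) : EReal :=
  if 0 < (∑ i, a i ^ α * q i ^ (1 - α)) ∧ (1 < α → ∀ i, q i = 0 → a i = 0) then
    (((α - 1)⁻¹ * Real.log (∑ i, a i ^ α * q i ^ (1 - α)) : ℝ) : EReal)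
  else ⊤

/-- The classical objective `f(q) = ∑ j, w j * (α-1)⁻¹ * log (∑ i, (a j i)^α * (q i)^(1-α))`,
real-valued version (intended for entrywise positive `q`). -/
noncomputable def fcl {n d : ℕ} (w : Fin n → ℝ) (a : Fin n → Fin d → ℝ) (α : ℝ)
    (q : Fin d → ℝ) : ℝ :=
  ∑ j, w j * ((α - 1)⁻¹ * Real.log (∑ i, a j i ^ α * q i ^ (1 - α)))

/-- Total CES demand in a Fisher market at prices `p`. -/
noncomputable def demand {n d : ℕ} (w : Fin n → ℝ) (a : Fin n → Fin d → ℝ)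
    (ρ : Fin n → ℝ) (p : Fin d → ℝ) : Fin d → ℝ :=
  fun i => ∑ j, w j * (a j i ^ (1 / (1 - ρ j)) * p i ^ (-(1 / (1 - ρ j)))) /
    (∑ k, a j k ^ (1 / (1 - ρ j)) * p k ^ (-(ρ j / (1 - ρ j))))

/-! Since `A^α ⪰ 0`, the map `U ↦ Tr[A^α U]` is monotone for the Loewner order and positively
homogeneous, so `e^{-r} V ⪯ U ⪯ e^r V` gives `e^{-r} Tr[A^α V] ≤ Tr[A^α U] ≤ e^r Tr[A^α V]`,
i.e. `|log Tr[A^α U] - log Tr[A^α V]| ≤ r`. With `U = Q^{1-α}`, `V = Q_⋆^{1-α}` this bounds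
each divergence difference by `|1/(1-α)| r`, and the weighted difference is a convex
combination of these. -/
open scoped MatrixOrder

namespace Matrix

variable {n 𝕜 : Type*} [Fintype n] [DecidableEq n] [RCLike 𝕜] {P M X Y : Matrix n n 𝕜}

theorem PosSemidef.trace_mul_nonneg (hP : P.PosSemidef) (hM : M.PosSemidef) :
    0 ≤ (P * M).trace := by
  set S := CFC.sqrt M
  have hS : Sᴴ = S := (CFC.sqrt_nonneg M).isSelfAdjoint
  have hM_eq : M = S * S := (CFC.sqrt_mul_sqrt_self M hM.nonneg).symm
  rw [hM_eq, ← Matrix.mul_assoc, trace_mul_comm, ← Matrix.mul_assoc]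
  nth_rw 1 [← hS]
  exact (hP.conjTranspose_mul_mul_same S).trace_nonneg

theorem PosSemidef.trace_mul_mono (hP : P.PosSemidef) (h : X ≤ Y) :
    (P * X).trace ≤ (P * Y).trace := by
  have := hP.trace_mul_nonneg h
  rwa [Matrix.mul_sub, trace_sub, sub_nonneg] at this

theorem PosDef.exists_pos_smul_one_le (hM : M.PosDef) :
    ∃ ε : ℝ, 0 < ε ∧ ε • (1 : Matrix n n 𝕜) ≤ M := by
  rcases subsingleton_or_nontrivial (Matrix n n 𝕜) with _ | _
  · exact ⟨1, one_pos, (Subsingleton.elim _ M).le⟩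
  obtain ⟨ε, hε, hle⟩ := (CFC.exists_pos_algebraMap_le_iff hM.isHermitian.isSelfAdjoint).2
    fun x hx => hM.isStrictlyPositive.spectrum_pos hx
  exact ⟨ε, hε, by rwa [Algebra.algebraMap_eq_smul_one] at hle⟩

theorem PosSemidef.trace_mul_pos (hP : P.PosSemidef) (hP0 : P ≠ 0) (hM : M.PosDef) :
    0 < (P * M).trace := by
  obtain ⟨ε, hε, hle⟩ := hM.exists_pos_smul_one_le
  have htrP : 0 < P.trace :=
    hP.trace_nonneg.lt_of_ne fun h => hP0 (hP.trace_eq_zero_iff.1 h.symm)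
  calc 0 < (ε : 𝕜) * P.trace := mul_pos (by exact_mod_cast hε) htrP
    _ = (P * (ε • 1)).trace := by simp [RCLike.real_smul_eq_coe_mul]
    _ ≤ (P * M).trace := hP.trace_mul_mono hle

end Matrix

section mpow

variable {d : ℕ} {A : Matrix (Fin d) (Fin d) ℂ}

theorem mpow_of_isHermitian (hA : A.IsHermitian) (r : ℝ) :
    mpow A r = Unitary.conjStarAlgAut ℂ _ hA.eigenvectorUnitary
      (diagonal fun i => ((hA.eigenvalues i ^ r : ℝ) : ℂ)) := by
  rw [mpow, dif_pos hA, Unitary.conjStarAlgAut_apply]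

theorem posSemidef_mpow (hA : A.PosSemidef) (r : ℝ) : (mpow A r).PosSemidef := by
  rw [mpow_of_isHermitian hA.isHermitian, Unitary.conjStarAlgAut_apply,
    Unitary.isUnit_coe.posSemidef_star_right_conjugate_iff, posSemidef_diagonal_iff]
  exact fun i => by exact_mod_cast Real.rpow_nonneg (hA.eigenvalues_nonneg i) r

theorem posDef_mpow (hA : A.PosDef) (r : ℝ) : (mpow A r).PosDef := by
  rw [mpow_of_isHermitian hA.isHermitian, Unitary.conjStarAlgAut_apply,
    Unitary.isUnit_coe.posDef_star_right_conjugate_iff, posDef_diagonal_iff]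
  exact fun i => by exact_mod_cast Real.rpow_pos_of_pos (hA.eigenvalues_pos i) r

theorem mpow_ne_zero (hA : A.PosSemidef) (hA0 : A ≠ 0) (r : ℝ) : mpow A r ≠ 0 := by
  obtain ⟨i, hi⟩ : ∃ i, hA.isHermitian.eigenvalues i ≠ 0 := by
    by_contra! h
    exact hA0 (hA.isHermitian.eigenvalues_eq_zero_iff.1 (funext h))
  have hpos : 0 < hA.isHermitian.eigenvalues i ^ r :=
    Real.rpow_pos_of_pos ((hA.eigenvalues_nonneg i).lt_of_ne' hi) r
  rw [mpow_of_isHermitian hA.isHermitian, map_ne_zero_iff _ (EquivLike.injective _)]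
  intro h
  simpa [hpos.ne'] using congr_fun₂ h i i

end mpow

theorem Real.abs_log_sub_log_le {x y r : ℝ} (hx : 0 < x) (hy : 0 < y)
    (hlow : Real.exp (-r) * y ≤ x) (hup : x ≤ Real.exp r * y) :
    |Real.log x - Real.log y| ≤ r := by
  rw [← Real.log_div hx.ne' hy.ne', abs_le, Real.le_log_iff_exp_le (div_pos hx hy),
    Real.log_le_iff_le_exp (div_pos hx hy), le_div_iff₀ hy, div_le_iff₀ hy]
  exact ⟨hlow, hup⟩

theorem abs_sum_mul_sub_sum_mul_le {ι : Type*} [Fintype ι] {w f g : ι → ℝ} {c : ℝ}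
    (hw : ∀ i, 0 ≤ w i) (hw1 : ∑ i, w i = 1) (hfg : ∀ i, |f i - g i| ≤ c) :
    |∑ i, w i * f i - ∑ i, w i * g i| ≤ c := by
  calc |∑ i, w i * f i - ∑ i, w i * g i| = |∑ i, w i * (f i - g i)| := by
        simp only [mul_sub, Finset.sum_sub_distrib]
    _ ≤ ∑ i, |w i * (f i - g i)| := Finset.abs_sum_le_sum_abs _ _
    _ ≤ ∑ i, w i * c := Finset.sum_le_sum fun i _ => by
        rw [abs_mul, abs_of_nonneg (hw i)]
        exact mul_le_mul_of_nonneg_left (hfg i) (hw i)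
    _ = c := by rw [← Finset.sum_mul, hw1, one_mul]

theorem abs_petzRenyi_sub_le {d : ℕ} {α r : ℝ} {A Q Q' : Matrix (Fin d) (Fin d) ℂ}
    (hA : A.PosSemidef) (hA0 : A ≠ 0) (hQ : Q.PosDef)
    (hlow : loewnerLE (Real.exp (-r) • mpow Q' (1 - α)) (mpow Q (1 - α)))
    (hup : loewnerLE (mpow Q (1 - α)) (Real.exp r • mpow Q' (1 - α))) :
    |petzRenyi α A Q - petzRenyi α A Q'| ≤ |1 / (1 - α)| * r := by
  have hP := posSemidef_mpow hA α
  set x := (trace (mpow A α * mpow Q (1 - α))).re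
  set y := (trace (mpow A α * mpow Q' (1 - α))).re
  have htrace_smul : ∀ c : ℝ, (trace (mpow A α * (c • mpow Q' (1 - α)))).re = c * y := by
    intro c
    simp [y, trace_smul]
  have hx : 0 < x :=
    (Complex.lt_def.1 (hP.trace_mul_pos (mpow_ne_zero hA hA0 α) (posDef_mpow hQ _))).1
  have hlow' : Real.exp (-r) * y ≤ x :=
    htrace_smul _ ▸ (Complex.le_def.1 (hP.trace_mul_mono hlow)).1
  have hup' : x ≤ Real.exp r * y := htrace_smul _ ▸ (Complex.le_def.1 (hP.trace_mul_mono hup)).1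
  have hy : 0 < y := pos_of_mul_pos_right (hx.trans_le hup') (Real.exp_pos r).le
  calc |petzRenyi α A Q - petzRenyi α A Q'| = |(α - 1)⁻¹| * |Real.log x - Real.log y| := by
        rw [petzRenyi, petzRenyi, ← mul_sub, abs_mul]
    _ ≤ |1 / (1 - α)| * r := by
        rw [one_div, abs_inv, abs_inv, abs_sub_comm]
        exact mul_le_mul_of_nonneg_left (Real.abs_log_sub_log_le hx hy hlow' hup') (by positivity)

theorem coe_le_mul_dTmat {d : ℕ} {c L : ℝ} (hc : 0 < c) {V U : Matrix (Fin d) (Fin d) ℂ}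
    (h : ∀ r : ℝ, loewnerLE (Real.exp (-r) • V) U → loewnerLE U (Real.exp r • V) →
      L ≤ c * r) :
    (L : EReal) ≤ c * dTmat V U := by
  have hdiv : ((L / c : ℝ) : EReal) ≤ dTmat V U := by
    refine le_sInf ?_
    rintro _ ⟨r, -, rfl, hlow, hup⟩
    exact EReal.coe_le_coe_iff.2 ((div_le_iff₀' hc).2 (h r hlow hup))
  calc (L : EReal) = c * ((L / c : ℝ) : EReal) := by
        rw [← EReal.coe_mul, mul_div_cancel₀ L hc.ne']
    _ ≤ c * dTmat V U := mul_le_mul_of_nonneg_left hdiv (EReal.coe_nonneg.2 hc.le)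

theorem petz_capacity_gradient_approx_general {n d : ℕ} (α : ℝ)
    (hα : α ∈ Set.Ioo (0 : ℝ) 1 ∪ Set.Ioi (1 : ℝ))
    (A : Fin n → Matrix (Fin d) (Fin d) ℂ) (hA : ∀ j, IsDensityMatrix (A j))
    (w : Fin n → ℝ) (hw : ∀ j, 0 < w j) (hw1 : ∑ j, w j = 1)
    (Qstar : Matrix (Fin d) (Fin d) ℂ)
    (Q : Matrix (Fin d) (Fin d) ℂ) (hQ : Q.PosDef) :
    ((|(∑ j, w j * petzRenyi α (A j) Q) - (∑ j, w j * petzRenyi α (A j) Qstar)| : ℝ)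
        : EReal) ≤
      ((|1 / (1 - α)| : ℝ) : EReal) * dTmat (mpow Qstar (1 - α)) (mpow Q (1 - α)) ∧
    ∀ j, ((|petzRenyi α (A j) Q - petzRenyi α (A j) Qstar| : ℝ) : EReal) ≤
      ((|1 / (1 - α)| : ℝ) : EReal) * dTmat (mpow Qstar (1 - α)) (mpow Q (1 - α)) := by
  have hα1 : α ≠ 1 := by
    rcases hα with h | h
    exacts [h.2.ne, h.ne']
  have hc : 0 < |1 / (1 - α)| := abs_pos.2 (one_div_ne_zero (sub_ne_zero.2 hα1.symm))
  have hA0 : ∀ j, A j ≠ 0 := fun j h => by simpa [h] using (hA j).2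
  have hbound : ∀ j r, loewnerLE (Real.exp (-r) • mpow Qstar (1 - α)) (mpow Q (1 - α)) →
      loewnerLE (mpow Q (1 - α)) (Real.exp r • mpow Qstar (1 - α)) →
      |petzRenyi α (A j) Q - petzRenyi α (A j) Qstar| ≤ |1 / (1 - α)| * r :=
    fun j _ => abs_petzRenyi_sub_le (hA j).1 (hA0 j) hQ
  exact ⟨coe_le_mul_dTmat hc fun r hlow hup =>
      abs_sum_mul_sub_sum_mul_le (fun j => (hw j).le) hw1 fun j => hbound j r hlow hup,
    fun j => coe_le_mul_dTmat hc (hbound j)⟩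

/-- approximation bounds for the value and the gradient of the Petz
capacity objective in terms of the Thompson metric. -/
theorem petz_capacity_gradient_approx {n d : ℕ} (α : ℝ)
    (hα : α ∈ Set.Ioo (0 : ℝ) 1 ∪ Set.Ioi (1 : ℝ))
    (A : Fin n → Matrix (Fin d) (Fin d) ℂ) (hA : ∀ j, IsDensityMatrix (A j))
    (hApos : (∑ j, A j).PosDef)
    (w : Fin n → ℝ) (hw : ∀ j, 0 < w j) (hw1 : ∑ j, w j = 1)
    (Qstar : Matrix (Fin d) (Fin d) ℂ)
    (hQstarMem : IsDensityMatrix Qstar)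
    (hQstarMin : ∀ Q, IsDensityMatrix Q → FE w A α Qstar ≤ FE w A α Q)
    (hQstarUniq : ∀ Q' : Matrix (Fin d) (Fin d) ℂ,
      (IsDensityMatrix Q' ∧ ∀ Q, IsDensityMatrix Q → FE w A α Q' ≤ FE w A α Q) →
        Q' = Qstar)
    (Q : Matrix (Fin d) (Fin d) ℂ) (hQ : Q.PosDef) :
    ((|(∑ j, w j * petzRenyi α (A j) Q) - (∑ j, w j * petzRenyi α (A j) Qstar)| : ℝ)
        : EReal) ≤
      ((|1 / (1 - α)| : ℝ) : EReal) * dTmat (mpow Qstar (1 - α)) (mpow Q (1 - α)) ∧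
    ∀ j, ((|petzRenyi α (A j) Q - petzRenyi α (A j) Qstar| : ℝ) : EReal) ≤
      ((|1 / (1 - α)| : ℝ) : EReal) * dTmat (mpow Qstar (1 - α)) (mpow Q (1 - α)) :=
  petz_capacity_gradient_approx_general α hα A hA w hw hw1 Qstar Q hQ

end
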